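/- arXiv:0811.3756 — 3 statements merged into one kernel-verified Lean document; each statement's English description precedes it below -/
import Mathlib

section
/- Let y : [0, z₀) → ℝ be C², positive, with y(0) = α > 0, ẏ(0) = 0, and satisfying ÿ(z) + (1/z)ẏ(z) = σ/y(z)² on (0, z₀) with σ > 0. Then y is nondecreasing, and in particular y(z) ≥ α for all z in [0, z₀). -/
open Set Filter
open Topology

theorem le_of_monotoneOn_Ioo_of_tendsto_nhdsGT {g : ℝ → ℝ} {a b L : ℝ}
    (hg : MonotoneOn g (Ioo a b)) (hlim : Tendsto g (𝓝[>] a) (𝓝 L)) {z : ℝ} (hz : z ∈ Ioo a b) :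
    L ≤ g z :=
  le_of_tendsto hlim <| by
    filter_upwards [Ioo_mem_nhdsGT hz.1] with t ht
    exact hg ⟨ht.1, ht.2.trans hz.2⟩ hz ht.2.le

/-- `z (ÿ + ẏ / z) = (z ẏ)'`: the radial operator in divergence form. -/
theorem hasDerivAt_mul_deriv {y : ℝ → ℝ} {z : ℝ} (hz : z ≠ 0)
    (hy : DifferentiableAt ℝ (deriv y) z) :
    HasDerivAt (fun t => t * deriv y t) (z * (deriv (deriv y) z + 1 / z * deriv y z)) z :=
  ((hasDerivAt_id' z).mul hy.hasDerivAt).congr_deriv (by field_simp; ring)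

/-- `z ẏ` is nondecreasing and tends to `0` at `0⁺`. -/
theorem deriv_nonneg_of_radial_nonneg {y : ℝ → ℝ} {z₀ : ℝ}
    (hy : ContDiffOn ℝ 2 y (Ioo 0 z₀))
    (hy'0 : Tendsto (deriv y) (𝓝[>] 0) (𝓝 0))
    (hrad : ∀ z ∈ Ioo (0:ℝ) z₀, 0 ≤ deriv (deriv y) z + 1 / z * deriv y z) :
    ∀ z ∈ Ioo (0:ℝ) z₀, 0 ≤ deriv y z := by
  have hdy : DifferentiableOn ℝ (deriv y) (Ioo 0 z₀) :=
    (hy.deriv_of_isOpen isOpen_Ioo (by norm_num)).differentiableOn one_ne_zero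
  have hderiv : ∀ z ∈ Ioo (0:ℝ) z₀, HasDerivAt (fun t => t * deriv y t)
      (z * (deriv (deriv y) z + 1 / z * deriv y z)) z := fun z hz =>
    hasDerivAt_mul_deriv hz.1.ne' (hdy.differentiableAt (isOpen_Ioo.mem_nhds hz))
  have hmono : MonotoneOn (fun t => t * deriv y t) (Ioo 0 z₀) := by
    refine monotoneOn_of_deriv_nonneg (convex_Ioo 0 z₀)
      (fun z hz => (hderiv z hz).continuousAt.continuousWithinAt)
      (fun z hz => (hderiv z (interior_subset hz)).differentiableAt.differentiableWithinAt)
      (fun z hz => ?_)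
    rw [interior_Ioo] at hz
    rw [(hderiv z hz).deriv]
    exact mul_nonneg hz.1.le (hrad z hz)
  have hlim : Tendsto (fun t => t * deriv y t) (𝓝[>] 0) (𝓝 0) := by
    simpa using (tendsto_nhdsWithin_of_tendsto_nhds tendsto_id).mul hy'0
  intro z hz
  exact nonneg_of_mul_nonneg_right (le_of_monotoneOn_Ioo_of_tendsto_nhdsGT hmono hlim hz) hz.1

theorem stmt1_general (σ α z₀ : ℝ) (hσ : 0 < σ)
    (y : ℝ → ℝ) (hy : ContDiffOn ℝ 2 y (Ico 0 z₀))
    (hy0 : y 0 = α)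
    (hy'0 : Tendsto (deriv y) (nhdsWithin 0 (Ioi 0)) (nhds 0))
    (hode : ∀ z ∈ Ioo (0:ℝ) z₀,
      deriv (deriv y) z + (1 / z) * deriv y z = σ / (y z) ^ 2) :
    MonotoneOn y (Ico 0 z₀) ∧ ∀ z ∈ Ico (0:ℝ) z₀, α ≤ y z := by
  have hyo : ContDiffOn ℝ 2 y (Ioo 0 z₀) := hy.mono Ioo_subset_Ico_self
  have hdy : ∀ z ∈ Ioo (0:ℝ) z₀, 0 ≤ deriv y z :=
    deriv_nonneg_of_radial_nonneg hyo hy'0 fun z hz => by rw [hode z hz]; positivity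
  have hmono : MonotoneOn y (Ico 0 z₀) :=
    monotoneOn_of_deriv_nonneg (convex_Ico 0 z₀) hy.continuousOn
      (by rw [interior_Ico]; exact hyo.differentiableOn two_ne_zero)
      (by rw [interior_Ico]; exact hdy)
  refine ⟨hmono, fun z hz => ?_⟩
  exact hy0 ▸ hmono ⟨le_rfl, hz.1.trans_lt hz.2⟩ hz hz.1

theorem stmt1 (σ α z₀ : ℝ) (hσ : 0 < σ) (hα : 0 < α) (hz₀ : 0 < z₀)
    (y : ℝ → ℝ) (hy : ContDiffOn ℝ 2 y (Ico 0 z₀))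
    (hpos : ∀ z ∈ Ico (0:ℝ) z₀, 0 < y z)
    (hy0 : y 0 = α)
    (hy'0 : Tendsto (deriv y) (nhdsWithin 0 (Ioi 0)) (nhds 0))
    (hode : ∀ z ∈ Ioo (0:ℝ) z₀,
      deriv (deriv y) z + (1 / z) * deriv y z = σ / (y z) ^ 2) :
    MonotoneOn y (Ico 0 z₀) ∧ ∀ z ∈ Ico (0:ℝ) z₀, α ≤ y z :=
  stmt1_general σ α z₀ hσ y hy hy0 hy'0 hode
end

section
/- Let y be a C² solution on [0, ∞) of ÿ(z) + (1/z)ẏ(z) = σ/y(z)², σ > 0, with y(0) = α > 0 and ẏ(0) = 0. If y is bounded above by a constant β > 0 on [0, ∞), then y(z) ≥ α + (σ/(4β²)) z² for all z ≥ 0, which contradicts the bound; hence y is unbounded, i.e., lim_{z→∞} y(z) = ∞. -/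
/-!
Multiplying the equation by `z` turns it into `(z ẏ)' = σ z / y²`. Since `z ẏ` vanishes at `0` and
its derivative is nonnegative, `ẏ ≥ 0` and `y` is nondecreasing. If moreover `y ≤ β`, then
`σ z / y² ≥ σ z / β²`, so comparing `z ẏ` with `σ z² / (2β²)` gives `ẏ(z) ≥ σ z / (2β²)`, and
comparing `y` with `y(0) + σ z² / (4β²)` gives the quadratic lower bound. A quadratic eventually
exceeds any bound, so `y` cannot stay below any `b`, and monotonicity upgrades this to `y → ∞`.
-/

open Set Filter

lemma monotoneOn_Ici_of_hasDerivAt_nonneg {f f' : ℝ → ℝ} {a : ℝ} (hf : ContinuousOn f (Ici a))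
    (hf' : ∀ x, a < x → HasDerivAt f (f' x) x) (hf'₀ : ∀ x, a < x → 0 ≤ f' x) :
    MonotoneOn f (Ici a) :=
  monotoneOn_of_hasDerivWithinAt_nonneg (convex_Ici a) hf
    (by simpa using fun x hx => (hf' x hx).hasDerivWithinAt) (by simpa using hf'₀)

section RadialEquation

variable {σ : ℝ} {y : ℝ → ℝ}

lemma hasDerivAt_mul_deriv_of_radial (hy : ContDiff ℝ 2 y)
    (hode : ∀ z, 0 < z → deriv (deriv y) z + (1 / z) * deriv y z = σ / (y z) ^ 2)
    {t : ℝ} (ht : 0 < t) :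
    HasDerivAt (fun s => s * deriv y s) (t * (σ / y t ^ 2)) t := by
  have h := (hasDerivAt_id' t).mul (hy.differentiable_deriv_two t).hasDerivAt
  rwa [show 1 * deriv y t + t * deriv (deriv y) t = t * (σ / y t ^ 2) by
    rw [← hode t ht]; field_simp; ring] at h

lemma continuous_mul_deriv (hy : ContDiff ℝ 2 y) : Continuous fun s => s * deriv y s :=
  continuous_id.mul (hy.continuous_deriv (by norm_num))

lemma deriv_nonneg_of_radial (hσ : 0 ≤ σ) (hy : ContDiff ℝ 2 y)
    (hode : ∀ z, 0 < z → deriv (deriv y) z + (1 / z) * deriv y z = σ / (y z) ^ 2)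
    {z : ℝ} (hz : 0 < z) : 0 ≤ deriv y z := by
  have hmono : MonotoneOn (fun s => s * deriv y s) (Ici 0) :=
    monotoneOn_Ici_of_hasDerivAt_nonneg (continuous_mul_deriv hy).continuousOn
      (fun t ht => hasDerivAt_mul_deriv_of_radial hy hode ht) (fun t ht => by positivity)
  have h : 0 * deriv y 0 ≤ z * deriv y z := hmono self_mem_Ici hz.le hz.le
  rw [zero_mul] at h
  exact nonneg_of_mul_nonneg_right h hz

lemma monotoneOn_Ici_of_radial (hσ : 0 ≤ σ) (hy : ContDiff ℝ 2 y)
    (hode : ∀ z, 0 < z → deriv (deriv y) z + (1 / z) * deriv y z = σ / (y z) ^ 2) :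
    MonotoneOn y (Ici 0) :=
  monotoneOn_Ici_of_hasDerivAt_nonneg hy.continuous.continuousOn
    (fun t _ => (hy.differentiable (by norm_num) t).hasDerivAt)
    (fun t ht => deriv_nonneg_of_radial hσ hy hode ht)

section Bounded

variable {β : ℝ}

lemma linear_le_deriv_of_radial_of_le (hσ : 0 ≤ σ) (hy : ContDiff ℝ 2 y)
    (hpos : ∀ z, 0 ≤ z → 0 < y z)
    (hode : ∀ z, 0 < z → deriv (deriv y) z + (1 / z) * deriv y z = σ / (y z) ^ 2)
    (hβ : ∀ z, 0 ≤ z → y z ≤ β) {z : ℝ} (hz : 0 < z) :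
    σ / (2 * β ^ 2) * z ≤ deriv y z := by
  set c := σ / (2 * β ^ 2)
  have hslope : ∀ t, 0 < t → t * (2 * c) ≤ t * (σ / y t ^ 2) := fun t ht => by
    have hyt := hpos t ht.le
    have hc : 2 * c = σ / β ^ 2 := by ring
    rw [hc]
    gcongr
    exact hβ t ht.le
  have hmono : MonotoneOn (fun s => s * deriv y s - c * s ^ 2) (Ici 0) :=
    monotoneOn_Ici_of_hasDerivAt_nonneg
      ((continuous_mul_deriv hy).sub (by fun_prop)).continuousOn
      (fun t ht => (hasDerivAt_mul_deriv_of_radial hy hode ht).sub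
        ((hasDerivAt_pow 2 t).const_mul c))
      (fun t ht => by have := hslope t ht; simp only [Nat.cast_ofNat]; linarith)
  have h := hmono self_mem_Ici hz.le hz.le
  simp only [zero_mul, ne_eq, OfNat.ofNat_ne_zero, not_false_eq_true, zero_pow] at h
  nlinarith

lemma quadratic_le_of_radial_of_le (hσ : 0 ≤ σ) (hy : ContDiff ℝ 2 y)
    (hpos : ∀ z, 0 ≤ z → 0 < y z)
    (hode : ∀ z, 0 < z → deriv (deriv y) z + (1 / z) * deriv y z = σ / (y z) ^ 2)
    (hβ : ∀ z, 0 ≤ z → y z ≤ β) {z : ℝ} (hz : 0 ≤ z) :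
    y 0 + σ / (4 * β ^ 2) * z ^ 2 ≤ y z := by
  have hmono : MonotoneOn (fun s => y s - σ / (4 * β ^ 2) * s ^ 2) (Ici 0) :=
    monotoneOn_Ici_of_hasDerivAt_nonneg (hy.continuous.sub (by fun_prop)).continuousOn
      (fun t _ => (hy.differentiable (by norm_num) t).hasDerivAt.sub
        ((hasDerivAt_pow 2 t).const_mul _))
      (fun t ht => by
        have := linear_le_deriv_of_radial_of_le hσ hy hpos hode hβ ht
        have hc : σ / (4 * β ^ 2) * (2 * t ^ (2 - 1)) = σ / (2 * β ^ 2) * t := by ring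
        simp only [Nat.cast_ofNat, hc]
        linarith)
  have h := hmono self_mem_Ici hz hz
  simp only [ne_eq, OfNat.ofNat_ne_zero, not_false_eq_true, zero_pow, mul_zero, sub_zero] at h
  linarith

end Bounded

lemma tendsto_atTop_of_radial (hσ : 0 < σ) (hy : ContDiff ℝ 2 y)
    (hpos : ∀ z, 0 ≤ z → 0 < y z)
    (hode : ∀ z, 0 < z → deriv (deriv y) z + (1 / z) * deriv y z = σ / (y z) ^ 2) :
    Tendsto y atTop atTop := by
  refine tendsto_atTop_atTop.2 fun b => ?_
  obtain ⟨z₀, hz₀, hb⟩ : ∃ z₀, 0 ≤ z₀ ∧ b ≤ y z₀ := by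
    by_contra! hlt
    have hb : 0 < b := (hpos 0 le_rfl).trans (hlt 0 le_rfl)
    have hc : 0 < σ / (4 * b ^ 2) := by positivity
    -- with `β = b`, the quadratic lower bound equals `b` at this `z`
    set z := Real.sqrt ((b - y 0) / (σ / (4 * b ^ 2)))
    have hz := quadratic_le_of_radial_of_le hσ.le hy hpos hode (fun t ht => (hlt t ht).le)
      (Real.sqrt_nonneg _) (z := z)
    rw [Real.sq_sqrt (div_nonneg (sub_nonneg.2 (hlt 0 le_rfl).le) hc.le),
      mul_div_cancel₀ _ hc.ne'] at hz
    linarith [hlt z (Real.sqrt_nonneg _)]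
  exact ⟨z₀, fun z hz => hb.trans (monotoneOn_Ici_of_radial hσ.le hy hode hz₀ (hz₀.trans hz) hz)⟩

end RadialEquation

theorem stmt3_general (σ α : ℝ) (hσ : 0 < σ)
    (y : ℝ → ℝ) (hy : ContDiff ℝ 2 y)
    (hpos : ∀ z, 0 ≤ z → 0 < y z)
    (hy0 : y 0 = α)
    (hode : ∀ z, 0 < z →
      deriv (deriv y) z + (1 / z) * deriv y z = σ / (y z) ^ 2) :
    (∀ β : ℝ, 0 < β → (∀ z, 0 ≤ z → y z ≤ β) →
      ∀ z, 0 ≤ z → α + (σ / (4 * β ^ 2)) * z ^ 2 ≤ y z) ∧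
      Tendsto y atTop atTop :=
  ⟨fun _ _ hβ _ hz => hy0 ▸ quadratic_le_of_radial_of_le hσ.le hy hpos hode hβ hz,
    tendsto_atTop_of_radial hσ hy hpos hode⟩

theorem stmt3 (σ α : ℝ) (hσ : 0 < σ) (hα : 0 < α)
    (y : ℝ → ℝ) (hy : ContDiff ℝ 2 y)
    (hpos : ∀ z, 0 ≤ z → 0 < y z)
    (hy0 : y 0 = α) (hy'0 : deriv y 0 = 0)
    (hode : ∀ z, 0 < z →
      deriv (deriv y) z + (1 / z) * deriv y z = σ / (y z) ^ 2) :
    (∀ β : ℝ, 0 < β → (∀ z, 0 ≤ z → y z ≤ β) →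
      ∀ z, 0 ≤ z → α + (σ / (4 * β ^ 2)) * z ^ 2 ≤ y z) ∧
      Tendsto y atTop atTop :=
  stmt3_general σ α hσ y hy hpos hy0 hode
end

section
/- Let σ > 0 and let y be a C² solution on [0,∞) of ÿ(z) + (1/z)ẏ(z) = σ/y(z)² with y(0) = α > 0, ẏ(0) = 0, y > 0. Define Q(z) = (C/√κ) ẏ(z) - (2π/z) ∫₀ᶻ τ / y(τ)² dτ for z > 0, where σ = 2π√κ/C with κ > 0 and C > 0. Then Q satisfies Q̇(z) = -(1/z) Q(z) for z > 0, and Q(z) → 0 as z → 0⁺; consequently Q(z) = 0 for all z > 0. -/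
/-! Multiplying the ODE by `z` turns its left side into the exact derivative `(z ẏ)˙`, so
integrating from `0` gives `z ẏ(z) = σ ∫₀ᶻ τ / y(τ)² dτ`. Since `σ · C/√κ = 2π`, the two terms of
`Q` then cancel identically on `(0, ∞)`, and the differential equation and the limit of `Q`
are trivial consequences. -/

open Set Filter Real intervalIntegral Topology

theorem integral_deriv_add_mul_deriv_deriv {y : ℝ → ℝ} (hy : ContDiff ℝ 2 y) (z : ℝ) :
    ∫ t in (0:ℝ)..z, (deriv y t + t * deriv (deriv y) t) = z * deriv y z := by
  have hy' : ContDiff ℝ 1 (deriv y) := hy.iterate_deriv' 1 1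
  have hy'' : Continuous (deriv (deriv y)) := (hy.iterate_deriv' 0 2).continuous
  have hderiv (t : ℝ) : HasDerivAt (fun t => t * deriv y t)
      (deriv y t + t * deriv (deriv y) t) t :=
    ((hasDerivAt_id' t).mul (hy'.differentiable one_ne_zero t).hasDerivAt).congr_deriv
      (by ring)
  rw [integral_eq_sub_of_hasDerivAt (fun t _ => hderiv t)
    ((hy'.continuous.add (continuous_id.mul hy'')).intervalIntegrable 0 z)]
  simp

theorem mul_deriv_eq_integral_of_radial_ode {y g : ℝ → ℝ} (hy : ContDiff ℝ 2 y)
    (hode : ∀ z, 0 < z → deriv (deriv y) z + (1 / z) * deriv y z = g z)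
    {z : ℝ} (hz : 0 ≤ z) :
    z * deriv y z = ∫ τ in (0:ℝ)..z, τ * g τ := by
  rw [← integral_deriv_add_mul_deriv_deriv hy z]
  refine integral_congr_ae (Eventually.of_forall fun t ht => ?_)
  rw [uIoc_of_le hz] at ht
  rw [← hode t ht.1]
  field_simp [ht.1.ne']
  ring

theorem stmt5_general (κ C : ℝ) (hκ : 0 < κ) (hC : 0 < C)
    (σ : ℝ) (hσ : σ = 2 * Real.pi * Real.sqrt κ / C)
    (y : ℝ → ℝ) (hy : ContDiff ℝ 2 y)
    (hode : ∀ z, 0 < z →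
      deriv (deriv y) z + (1 / z) * deriv y z = σ / (y z) ^ 2)
    (Q : ℝ → ℝ)
    (hQ : ∀ z, 0 < z → Q z = (C / Real.sqrt κ) * deriv y z -
      (2 * Real.pi / z) * ∫ τ in (0:ℝ)..z, τ / (y τ) ^ 2) :
    (∀ z, 0 < z → deriv Q z = -(1 / z) * Q z) ∧
      Tendsto Q (nhdsWithin 0 (Ioi 0)) (nhds 0) ∧
      ∀ z, 0 < z → Q z = 0 := by
  have hsqrtκ : 0 < √κ := sqrt_pos.mpr hκ
  have hQ_zero (z : ℝ) (hz : 0 < z) : Q z = 0 := by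
    have hint : z * deriv y z = σ * ∫ τ in (0:ℝ)..z, τ / (y τ) ^ 2 := by
      rw [mul_deriv_eq_integral_of_radial_ode hy hode hz.le, ← integral_const_mul]
      simp only [mul_div_left_comm]
    have h2π : 2 * π = σ * (C / √κ) := by
      rw [hσ]
      field_simp
    rw [hQ z hz, h2π]
    field_simp
    linear_combination C * hint
  have hQ_ev : Q =ᶠ[𝓝[>] 0] 0 := eventually_nhdsWithin_of_forall hQ_zero
  refine ⟨fun z hz => ?_, tendsto_const_nhds.congr' hQ_ev.symm, hQ_zero⟩
  have hQ_nhds : Q =ᶠ[𝓝 z] 0 := eventually_of_mem (Ioi_mem_nhds hz) hQ_zero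
  rw [hQ_nhds.deriv_eq, hQ_zero z hz]
  simp

theorem stmt5 (κ C α : ℝ) (hκ : 0 < κ) (hC : 0 < C) (hα : 0 < α)
    (σ : ℝ) (hσ : σ = 2 * Real.pi * Real.sqrt κ / C)
    (y : ℝ → ℝ) (hy : ContDiff ℝ 2 y)
    (hpos : ∀ z, 0 ≤ z → 0 < y z)
    (hy0 : y 0 = α) (hy'0 : deriv y 0 = 0)
    (hode : ∀ z, 0 < z →
      deriv (deriv y) z + (1 / z) * deriv y z = σ / (y z) ^ 2)
    (Q : ℝ → ℝ)
    (hQ : ∀ z, 0 < z → Q z = (C / Real.sqrt κ) * deriv y z -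
      (2 * Real.pi / z) * ∫ τ in (0:ℝ)..z, τ / (y τ) ^ 2) :
    (∀ z, 0 < z → deriv Q z = -(1 / z) * Q z) ∧
      Tendsto Q (nhdsWithin 0 (Ioi 0)) (nhds 0) ∧
      ∀ z, 0 < z → Q z = 0 :=
  stmt5_general κ C hκ hC σ hσ y hy hode Q hQ
end
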